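/- Let k, d, n be natural numbers with k ≥ 1, d ≥ 0 and n ≥ 2. If n is even, then δ(k,d,n) = 0 if and only if k = 1 and d = 0. -/
import Mathlib

def delta (k d n : ℕ) : ℤ :=
  ∑ i ∈ Finset.range (n + 1), ∑ j ∈ Finset.range (n - i + 1),
    (Nat.choose (n + 1) (n - i - j) : ℤ) * (-(k : ℤ)) ^ j * ((d : ℤ) - 1) ^ i

private lemma tri_reindex (f : ℕ → ℕ → ℤ) (n : ℕ) :
    ∑ i ∈ Finset.range (n + 1), ∑ j ∈ Finset.range (n - i + 1), f i j
      = ∑ p ∈ Finset.range (n + 1), ∑ i ∈ Finset.range (p + 1), f i (p - i) := by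
  induction n with
  | zero => simp
  | succ n ih =>
    rw [Finset.sum_range_succ, Finset.sum_range_succ
      (f := fun p => ∑ i ∈ Finset.range (p + 1), f i (p - i)), ← ih]
    have h1 : ∀ i ∈ Finset.range (n + 1),
        ∑ j ∈ Finset.range (n + 1 - i + 1), f i j
          = ∑ j ∈ Finset.range (n - i + 1), f i j + f i (n + 1 - i) := by
      intro i hi
      rw [Finset.mem_range] at hi
      have h : n + 1 - i = (n - i) + 1 := by omega
      rw [h, Finset.sum_range_succ]
    rw [Finset.sum_congr rfl h1, Finset.sum_add_distrib,
      Finset.sum_range_succ (fun i => f i (n + 1 - i)) (n + 1)]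
    simp only [Nat.sub_self, Nat.add_sub_cancel, Finset.sum_range_one]
    rw [zero_add, Finset.sum_range_one]
    ring

private lemma key (x y : ℤ) (n : ℕ) :
    (x - y) * (∑ i ∈ Finset.range (n + 1), ∑ j ∈ Finset.range (n - i + 1),
      (Nat.choose (n + 1) (n - i - j) : ℤ) * x ^ j * y ^ i)
    = (x + 1) ^ (n + 1) - (y + 1) ^ (n + 1) := by
  rw [tri_reindex (fun i j => (Nat.choose (n + 1) (n - i - j) : ℤ) * x ^ j * y ^ i) n]
  have step1 : ∀ p ∈ Finset.range (n + 1),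
      (∑ i ∈ Finset.range (p + 1),
        (Nat.choose (n + 1) (n - i - (p - i)) : ℤ) * x ^ (p - i) * y ^ i)
        = (Nat.choose (n + 1) (n - p) : ℤ) * ∑ i ∈ Finset.range (p + 1), x ^ (p - i) * y ^ i := by
    intro p hp
    rw [Finset.mul_sum]
    refine Finset.sum_congr rfl fun i hi => ?_
    rw [Finset.mem_range] at hi
    have h : n - i - (p - i) = n - p := by omega
    rw [h, mul_assoc]
  rw [Finset.sum_congr rfl step1, Finset.mul_sum]
  have step2 : ∀ p ∈ Finset.range (n + 1),
      (x - y) * ((Nat.choose (n + 1) (n - p) : ℤ) * ∑ i ∈ Finset.range (p + 1), x ^ (p - i) * y ^ i)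
        = (Nat.choose (n + 1) (n - p) : ℤ) * (x ^ (p + 1) - y ^ (p + 1)) := by
    intro p hp
    have hg : (∑ i ∈ Finset.range (p + 1), y ^ i * x ^ (p + 1 - 1 - i)) * (y - x)
        = y ^ (p + 1) - x ^ (p + 1) := geom_sum₂_mul y x (p + 1)
    have hg2 : (x - y) * (∑ i ∈ Finset.range (p + 1), x ^ (p - i) * y ^ i)
        = x ^ (p + 1) - y ^ (p + 1) := by
      have : (∑ i ∈ Finset.range (p + 1), x ^ (p - i) * y ^ i)
          = ∑ i ∈ Finset.range (p + 1), y ^ i * x ^ (p + 1 - 1 - i) := by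
        refine Finset.sum_congr rfl fun i hi => ?_
        rw [mul_comm]
        norm_num
      rw [this]
      linarith [hg]
    rw [← hg2]; ring
  rw [Finset.sum_congr rfl step2]
  have hx : (x + 1) ^ (n + 1) = ∑ r ∈ Finset.range (n + 2), x ^ r * (Nat.choose (n + 1) r : ℤ) := by
    rw [add_pow]; refine Finset.sum_congr rfl fun r hr => ?_; ring
  have hy : (y + 1) ^ (n + 1) = ∑ r ∈ Finset.range (n + 2), y ^ r * (Nat.choose (n + 1) r : ℤ) := by
    rw [add_pow]; refine Finset.sum_congr rfl fun r hr => ?_; ring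
  rw [hx, hy, ← Finset.sum_sub_distrib]
  rw [Finset.sum_range_succ' (fun r => x ^ r * (Nat.choose (n + 1) r : ℤ)
      - y ^ r * (Nat.choose (n + 1) r : ℤ)) (n + 1)]
  simp only [pow_zero, Nat.choose_zero_right, Nat.cast_one, mul_one, sub_self, add_zero]
  refine Finset.sum_congr rfl fun p hp => ?_
  rw [Finset.mem_range] at hp
  have h : Nat.choose (n + 1) (n - p) = Nat.choose (n + 1) (p + 1) := by
    have : n - p = (n + 1) - (p + 1) := by omega
    rw [this, Nat.choose_symm (by omega)]
  rw [h]; ring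

private lemma delta_one_zero (n : ℕ) (hn : 1 ≤ n) : delta 1 0 n = 0 := by
  unfold delta
  simp only [Nat.cast_one, Nat.cast_zero, zero_sub]
  rw [tri_reindex (fun i j => (Nat.choose (n + 1) (n - i - j) : ℤ) * (-1) ^ j * (-1) ^ i) n]
  have step : ∀ p ∈ Finset.range (n + 1),
      (∑ i ∈ Finset.range (p + 1),
        (Nat.choose (n + 1) (n - i - (p - i)) : ℤ) * (-1) ^ (p - i) * (-1 : ℤ) ^ i)
        = (n + 1 : ℤ) * ((-1) ^ p * (Nat.choose n p : ℤ)) := by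
    intro p hp
    rw [Finset.mem_range] at hp
    have e1 : ∀ i ∈ Finset.range (p + 1),
        (Nat.choose (n + 1) (n - i - (p - i)) : ℤ) * (-1) ^ (p - i) * (-1 : ℤ) ^ i
          = (Nat.choose (n + 1) (p + 1) : ℤ) * (-1) ^ p := by
      intro i hi
      rw [Finset.mem_range] at hi
      have h : n - i - (p - i) = (n + 1) - (p + 1) := by omega
      rw [h, Nat.choose_symm (by omega), mul_assoc, ← pow_add]
      have : p - i + i = p := by omega
      rw [this]
    rw [Finset.sum_congr rfl e1, Finset.sum_const, Finset.card_range]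
    have hc : ((n : ℤ) + 1) * (Nat.choose n p : ℤ) = (Nat.choose (n + 1) (p + 1) : ℤ) * (p + 1) := by
      exact_mod_cast congrArg (Nat.cast : ℕ → ℤ) (Nat.add_one_mul_choose_eq n p)
    rw [nsmul_eq_mul]
    push_cast
    linear_combination (-(-1 : ℤ) ^ p) * hc
  rw [Finset.sum_congr rfl step, ← Finset.mul_sum]
  rw [Int.alternating_sum_range_choose_of_ne (by omega : n ≠ 0)]
  ring

theorem delta_eq_zero_iff_of_even (k d n : ℕ) (hk : 1 ≤ k) (hn : 2 ≤ n) (heven : Even n) :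
    delta k d n = 0 ↔ k = 1 ∧ d = 0 := by
  constructor
  · intro h
    have hkey := key (-(k : ℤ)) ((d : ℤ) - 1) n
    have hδ : (∑ i ∈ Finset.range (n + 1), ∑ j ∈ Finset.range (n - i + 1),
        (Nat.choose (n + 1) (n - i - j) : ℤ) * (-(k : ℤ)) ^ j * ((d : ℤ) - 1) ^ i) = 0 := h
    rw [hδ, mul_zero] at hkey
    have hodd : Odd (n + 1) := Even.add_one heven
    have hpow : (-(k : ℤ) + 1) ^ (n + 1) = ((d : ℤ) - 1 + 1) ^ (n + 1) := by linarith
    have := (hodd.strictMono_pow (R := ℤ)).injective hpow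
    have hkd : -(k : ℤ) + 1 = (d : ℤ) := by linarith [this]
    constructor <;> omega
  · rintro ⟨rfl, rfl⟩
    exact delta_one_zero n (by omega)
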